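/- arXiv:1512.08524 — 3 statements merged into one kernel-verified Lean document; each statement's English description precedes it below -/
import Mathlib

section
/- Let λ₁,…,λ_r be nonnegative integers with λ_{2r-l+1} ≥ 1, where r+2 ≤ l ≤ 2r and 2r-l+1 ≤ k ≤ r. Then (λ_{2r-l+1}+⋯+λ_k+k+l-2r-1)(λ_{2r-l+1}+⋯+λ_k+k+l-2r) · (2λ_{2r-l+1}+⋯+2λ_{r-1}+λ_r+2l-2r-3)/(2λ_{2r-l+1}+⋯+2λ_{r-1}+λ_r+2l-2r-1) > 1, while the product ∏_{j=k}^{r-1} (λ_{2r-l+1}+⋯+λ_j+2λ_{j+1}+⋯+2λ_{r-1}+λ_r+l-j-2)/(λ_{2r-l+1}+⋯+λ_j+2λ_{j+1}+⋯+2λ_{r-1}+λ_r+l-j-1) · ∏_{i=1}^{r-k-1} (λ_{2r-l+1}+⋯+λ_{r-i}+l-r-i-1)/(λ_{2r-l+1}+⋯+λ_{r-i}+l-r-i) is at most 1. In particular equation (3.10.1) of the paper has no solutions, so the two sides are never equal. -/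
open Finset

/-- The key inequality for genericity (equation (3.10.1) of the paper has no
solutions): under the admissibility hypotheses, the left-hand side is `> 1`
while the right-hand side is `≤ 1`; in particular they are never equal. -/
theorem stmt_12 (r l k : ℕ) (lam : ℕ → ℕ)
    (hl1 : r + 2 ≤ l) (hl2 : l ≤ 2 * r)
    (hk1 : 2 * r - l + 1 ≤ k) (hk2 : k ≤ r)
    (hlam : 1 ≤ lam (2 * r - l + 1)) :
    let S : ℕ → ℕ → ℝ := fun a b => ∑ m ∈ Icc a b, (lam m : ℝ)
    let T : ℝ := 2 * S (2 * r - l + 1) (r - 1) + (lam r : ℝ)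
    let LHS : ℝ :=
      (S (2 * r - l + 1) k + k + l - 2 * r - 1) *
      (S (2 * r - l + 1) k + k + l - 2 * r) *
      ((T + 2 * l - 2 * r - 3) / (T + 2 * l - 2 * r - 1))
    let RHS : ℝ :=
      (∏ j ∈ Icc k (r - 1),
        (S (2 * r - l + 1) j + 2 * S (j + 1) (r - 1) + (lam r : ℝ) + l - j - 2) /
        (S (2 * r - l + 1) j + 2 * S (j + 1) (r - 1) + (lam r : ℝ) + l - j - 1)) *
      (∏ i ∈ Icc 1 (r - k - 1),
        (S (2 * r - l + 1) (r - i) + l - r - i - 1) /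
        (S (2 * r - l + 1) (r - i) + l - r - i))
    1 < LHS ∧ RHS ≤ 1 ∧ LHS ≠ RHS := by
  intro S T LHS RHS
  have hr2 : 2 ≤ r := by omega
  have hSnn : ∀ a b : ℕ, (0:ℝ) ≤ S a b := fun a b =>
    Finset.sum_nonneg fun m _ => by positivity
  have hS1 : ∀ b : ℕ, 2 * r - l + 1 ≤ b → (1:ℝ) ≤ S (2 * r - l + 1) b := by
    intro b hb
    have h2 : ((lam (2 * r - l + 1) : ℝ)) ≤ S (2 * r - l + 1) b :=
      Finset.single_le_sum (f := fun m => (lam m : ℝ)) (fun i _ => by positivity)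
        (Finset.mem_Icc.mpr ⟨le_refl _, hb⟩)
    have h1 : (1:ℝ) ≤ (lam (2 * r - l + 1) : ℝ) := by exact_mod_cast hlam
    linarith
  have hAk : (1:ℝ) ≤ S (2 * r - l + 1) k := hS1 k hk1
  have hkl : 2 * r + 1 ≤ k + l := by omega
  have hklR : 2 * (r:ℝ) + 1 ≤ (k:ℝ) + (l:ℝ) := by exact_mod_cast hkl
  have hlR : (r:ℝ) + 2 ≤ (l:ℝ) := by exact_mod_cast hl1
  have hT : (2:ℝ) ≤ T := by
    have h := hS1 (r - 1) (by omega)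
    have : (0:ℝ) ≤ (lam r : ℝ) := by positivity
    unfold T
    linarith
  have key : ∀ x R : ℝ, 1 ≤ x → 3/5 ≤ R → 1 < x * (x + 1) * R := by
    intro x R hx hR
    nlinarith [mul_nonneg (sub_nonneg.mpr hx) (sub_nonneg.mpr hR),
      mul_nonneg (mul_nonneg (sub_nonneg.mpr hx) (sub_nonneg.mpr hx)) (sub_nonneg.mpr hR)]
  have h1 : 1 < LHS := by
    unfold LHS
    have hden : (5:ℝ) ≤ T + 2 * l - 2 * r - 1 := by linarith
    have hratio : (3:ℝ)/5 ≤ (T + 2 * l - 2 * r - 3) / (T + 2 * l - 2 * r - 1) := by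
      rw [div_le_div_iff₀ (by norm_num) (by linarith)]
      linarith
    have hx : (1:ℝ) ≤ S (2 * r - l + 1) k + k + l - 2 * r - 1 := by linarith
    have := key (S (2 * r - l + 1) k + (k:ℝ) + l - 2 * r - 1) _ hx hratio
    exact this.trans_le (le_of_eq (by ring))
  have h2 : RHS ≤ 1 := by
    unfold RHS
    have hP1le : ∀ j ∈ Icc k (r - 1),
        (S (2 * r - l + 1) j + 2 * S (j + 1) (r - 1) + (lam r : ℝ) + l - j - 2) /
        (S (2 * r - l + 1) j + 2 * S (j + 1) (r - 1) + (lam r : ℝ) + l - j - 1) ≤ 1 ∧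
        0 ≤ (S (2 * r - l + 1) j + 2 * S (j + 1) (r - 1) + (lam r : ℝ) + l - j - 2) /
        (S (2 * r - l + 1) j + 2 * S (j + 1) (r - 1) + (lam r : ℝ) + l - j - 1) := by
      intro j hj
      rw [Finset.mem_Icc] at hj
      have hj3 : j + 3 ≤ l := by omega
      have hjR : (j:ℝ) + 3 ≤ (l:ℝ) := by exact_mod_cast hj3
      have hSj : (1:ℝ) ≤ S (2 * r - l + 1) j := hS1 j (le_trans hk1 hj.1)
      have hS2 : (0:ℝ) ≤ S (j + 1) (r - 1) := hSnn _ _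
      have hlr : (0:ℝ) ≤ (lam r : ℝ) := by positivity
      constructor
      · rw [div_le_one (by linarith)]
        linarith
      · apply div_nonneg <;> linarith
    have hP2le : ∀ i ∈ Icc 1 (r - k - 1),
        (S (2 * r - l + 1) (r - i) + l - r - i - 1) /
        (S (2 * r - l + 1) (r - i) + l - r - i) ≤ 1 ∧
        0 ≤ (S (2 * r - l + 1) (r - i) + l - r - i - 1) /
        (S (2 * r - l + 1) (r - i) + l - r - i) := by
      intro i hi
      rw [Finset.mem_Icc] at hi
      have hri : 2 * r - l + 1 ≤ r - i := by omega
      have hil : r + i + 2 ≤ l := by omega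
      have hilR : (r:ℝ) + i + 2 ≤ (l:ℝ) := by exact_mod_cast hil
      have hSi : (1:ℝ) ≤ S (2 * r - l + 1) (r - i) := hS1 _ hri
      constructor
      · rw [div_le_one (by linarith)]
        linarith
      · apply div_nonneg <;> linarith
    have hp1 : (∏ j ∈ Icc k (r - 1),
        (S (2 * r - l + 1) j + 2 * S (j + 1) (r - 1) + (lam r : ℝ) + l - j - 2) /
        (S (2 * r - l + 1) j + 2 * S (j + 1) (r - 1) + (lam r : ℝ) + l - j - 1)) ≤ 1 :=
      Finset.prod_le_one (fun j hj => (hP1le j hj).2) (fun j hj => (hP1le j hj).1)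
    have hp1n : 0 ≤ (∏ j ∈ Icc k (r - 1),
        (S (2 * r - l + 1) j + 2 * S (j + 1) (r - 1) + (lam r : ℝ) + l - j - 2) /
        (S (2 * r - l + 1) j + 2 * S (j + 1) (r - 1) + (lam r : ℝ) + l - j - 1)) :=
      Finset.prod_nonneg (fun j hj => (hP1le j hj).2)
    have hp2 : (∏ i ∈ Icc 1 (r - k - 1),
        (S (2 * r - l + 1) (r - i) + l - r - i - 1) /
        (S (2 * r - l + 1) (r - i) + l - r - i)) ≤ 1 :=
      Finset.prod_le_one (fun i hi => (hP2le i hi).2) (fun i hi => (hP2le i hi).1)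
    have hp2n : 0 ≤ (∏ i ∈ Icc 1 (r - k - 1),
        (S (2 * r - l + 1) (r - i) + l - r - i - 1) /
        (S (2 * r - l + 1) (r - i) + l - r - i)) :=
      Finset.prod_nonneg (fun i hi => (hP2le i hi).2)
    calc _ ≤ 1 * 1 := mul_le_mul hp1 hp2 hp2n (by linarith)
    _ = 1 := by norm_num
  exact ⟨h1, h2, by intro h; rw [h] at h1; linarith⟩
end

section
/- Under the hypotheses of the previous polynomial identity with A ∉ {-1,-2} and (A+2)c_k - (A+1)c_{k-1} ≠ 0, the sum a_k + b_k is determined by: a_k + b_k = [(A+2)(a_{k+1}b_{k+1} - c_{k-1}²) + (A+3)c_{k-1}c_k - A·a_k b_k] / [(A+2)c_k - (A+1)c_{k-1}]. -/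
/-- Solving the coefficient relations of the cubic identity for `a_k + b_k`. -/
theorem stmt_15 (A ck1 ck ak bk ak1 bk1 : ℂ)
    (hA1 : A ≠ -1) (hA2 : A ≠ -2)
    (hden : (A + 2) * ck - (A + 1) * ck1 ≠ 0)
    (hid : ∀ x : ℂ,
      (A + 1) * (x - ck) * (x - ak) * (x - bk) + x * (x - ck) * (x - ak) +
        x * (x - ck) * (x - bk) - x * (x - ak) * (x - bk) =
      (A + 2) * (x - ak1) * (x - bk1) * (x - ck1)) :
    ak + bk = ((A + 2) * (ak1 * bk1 - ck1 ^ 2) + (A + 3) * ck1 * ck - A * (ak * bk)) /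
      ((A + 2) * ck - (A + 1) * ck1) := by
  rw [eq_div_iff hden]
  linear_combination (1/2 + ck1/2) * hid 1 + (-1/2 + ck1/2) * hid (-1) - ck1 * hid 0
end

section
/- Let λ₁, λ₂ be nonnegative integers with λ₁ > 0. Then the two monic quadratic polynomials y₁, y₂ from the explicit B₂ solution — y₂(x) = x² - 2(2λ₁+λ₂+1)(λ₁+λ₂+1)/((2λ₁+λ₂+2)(λ₁+λ₂+2))·x + (2λ₁+λ₂+1)(λ₁+λ₂+1)²/((2λ₁+λ₂+3)(λ₁+λ₂+2)²) and y₁ as in the paper — satisfy: y₁ and y₂ have no common roots, neither has a multiple root, y₁(1) ≠ 0, y₁(0) ≠ 0, and y₂(0) ≠ 0 whenever λ₂ > 0. -/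
open Polynomial

private noncomputable def qB1 (a b : ℂ) : ℂ :=
  (2 * a + b + 1) * (2 * a ^ 2 + 2 * a * b + 4 * a + b + 2) /
    ((a + 1) * (a + b + 2) * (2 * a + b + 2))

private noncomputable def qC1 (a b : ℂ) : ℂ :=
  a * (a + b + 1) * (2 * a + b + 1) / ((a + 1) * (a + b + 2) * (2 * a + b + 3))

private noncomputable def qB2 (a b : ℂ) : ℂ :=
  2 * (2 * a + b + 1) * (a + b + 1) / ((2 * a + b + 2) * (a + b + 2))

private noncomputable def qC2 (a b : ℂ) : ℂ :=
  (2 * a + b + 1) * (a + b + 1) ^ 2 / ((2 * a + b + 3) * (a + b + 2) ^ 2)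

/-- A monic quadratic over `ℂ` with nonzero discriminant is squarefree. -/
private lemma sf_quadratic_aux (B Cc : ℂ) (h : B ^ 2 - 4 * Cc ≠ 0) :
    Squarefree (X ^ 2 - C B * X + C Cc) := by
  obtain ⟨w, hw⟩ := IsAlgClosed.exists_pow_nat_eq (k := ℂ) (B ^ 2 - 4 * Cc) (n := 2)
    (by norm_num)
  have hw0 : w ≠ 0 := by
    intro h0
    apply h
    rw [← hw, h0]
    ring
  have hrs : (B + w) / 2 ≠ (B - w) / 2 := by
    intro hEq
    apply hw0
    linear_combination hEq
  have hfac : X ^ 2 - C B * X + C Cc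
      = (X - C ((B + w) / 2)) * (X - C ((B - w) / 2)) := by
    have h1 : B = (B + w) / 2 + (B - w) / 2 := by ring
    have h2 : Cc = (B + w) / 2 * ((B - w) / 2) := by linear_combination hw / 4
    rw [show (C B : ℂ[X]) = C ((B + w) / 2 + (B - w) / 2) from by rw [← h1],
      show (C Cc : ℂ[X]) = C ((B + w) / 2 * ((B - w) / 2)) from by rw [← h2],
      C_add, C_mul]
    ring
  rw [hfac]
  refine Separable.squarefree (Separable.mul separable_X_sub_C separable_X_sub_C ?_)
  exact isCoprime_X_sub_C_of_isUnit_sub (isUnit_iff_ne_zero.mpr (sub_ne_zero.mpr hrs))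

set_option maxHeartbeats 1000000 in
private lemma lem_d1 (a b : ℂ) (n1 : a + 1 ≠ 0) (n2 : a + b + 2 ≠ 0)
    (n3 : 2 * a + b + 2 ≠ 0) (n4 : 2 * a + b + 3 ≠ 0) :
    qB1 a b ^ 2 - 4 * qC1 a b
      = (2*a+b+1) * (12*a^4 + 24*a^3*b + 48*a^3 + 20*a^2*b^2 + 76*a^2*b + 72*a^2
          + 8*a*b^3 + 44*a*b^2 + 80*a*b + 48*a + b^4 + 8*b^3 + 23*b^2 + 28*b + 12) /
        ((2*a+b+2)^2 * (a+b+2)^2 * (2*a+b+3) * (a+1)^2) := by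
  unfold qB1 qC1
  have d1 : ((a + 1) * (a + b + 2) * (2 * a + b + 2)) ^ 2 ≠ 0 :=
    pow_ne_zero _ (mul_ne_zero (mul_ne_zero n1 n2) n3)
  have d2 : ((a + 1) * (a + b + 2) * (2 * a + b + 3)) ≠ 0 :=
    mul_ne_zero (mul_ne_zero n1 n2) n4
  have d3 : (2*a+b+2)^2 * (a+b+2)^2 * (2*a+b+3) * (a+1)^2 ≠ 0 :=
    mul_ne_zero (mul_ne_zero (mul_ne_zero (pow_ne_zero _ n3) (pow_ne_zero _ n2)) n4)
      (pow_ne_zero _ n1)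
  rw [div_pow, ← mul_div_assoc, div_sub_div _ _ d1 d2, div_eq_div_iff (mul_ne_zero d1 d2) d3]
  ring

set_option maxHeartbeats 1000000 in
private lemma lem_d2 (a b : ℂ) (n2 : a + b + 2 ≠ 0)
    (n3 : 2 * a + b + 2 ≠ 0) (n4 : 2 * a + b + 3 ≠ 0) :
    qB2 a b ^ 2 - 4 * qC2 a b
      = -4 * ((2*a+b+1) * (a+b+1)^2) / ((2*a+b+2)^2 * (a+b+2)^2 * (2*a+b+3)) := by
  unfold qB2 qC2
  have d1 : ((2 * a + b + 2) * (a + b + 2)) ^ 2 ≠ 0 := pow_ne_zero _ (mul_ne_zero n3 n2)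
  have d2 : ((2 * a + b + 3) * (a + b + 2) ^ 2) ≠ 0 := mul_ne_zero n4 (pow_ne_zero _ n2)
  have d3 : (2*a+b+2)^2 * (a+b+2)^2 * (2*a+b+3) ≠ 0 :=
    mul_ne_zero (mul_ne_zero (pow_ne_zero _ n3) (pow_ne_zero _ n2)) n4
  rw [div_pow, ← mul_div_assoc, div_sub_div _ _ d1 d2, div_eq_div_iff (mul_ne_zero d1 d2) d3]
  ring

set_option maxHeartbeats 1000000 in
private lemma lem_e1 (a b : ℂ) (n1 : a + 1 ≠ 0) (n2 : a + b + 2 ≠ 0)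
    (n3 : 2 * a + b + 2 ≠ 0) (n4 : 2 * a + b + 3 ≠ 0) :
    1 - qB1 a b + qC1 a b
      = (6*a^2 + 6*a*b + 12*a + b^2 + 5*b + 6) /
        ((2*a+b+2) * (a+b+2) * (2*a+b+3) * (a+1)) := by
  unfold qB1 qC1
  have d1 : ((a + 1) * (a + b + 2) * (2 * a + b + 2)) ≠ 0 :=
    mul_ne_zero (mul_ne_zero n1 n2) n3
  have d2 : ((a + 1) * (a + b + 2) * (2 * a + b + 3)) ≠ 0 :=
    mul_ne_zero (mul_ne_zero n1 n2) n4
  have d3 : (2*a+b+2) * (a+b+2) * (2*a+b+3) * (a+1) ≠ 0 :=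
    mul_ne_zero (mul_ne_zero (mul_ne_zero n3 n2) n4) n1
  rw [one_sub_div d1, div_add_div _ _ d1 d2, div_eq_div_iff (mul_ne_zero d1 d2) d3]
  ring

set_option maxHeartbeats 1000000 in
private lemma lem_E1 (a b : ℂ) (n1 : a + 1 ≠ 0) (n2 : a + b + 2 ≠ 0)
    (n4 : 2 * a + b + 3 ≠ 0) :
    qC2 a b - qC1 a b
      = (2*a+b+1) * (a+b+1) * (b+1) / ((a+1) * (a+b+2)^2 * (2*a+b+3)) := by
  unfold qC1 qC2
  have d1 : ((2 * a + b + 3) * (a + b + 2) ^ 2) ≠ 0 := mul_ne_zero n4 (pow_ne_zero _ n2)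
  have d2 : ((a + 1) * (a + b + 2) * (2 * a + b + 3)) ≠ 0 :=
    mul_ne_zero (mul_ne_zero n1 n2) n4
  have d3 : (a+1) * (a+b+2)^2 * (2*a+b+3) ≠ 0 :=
    mul_ne_zero (mul_ne_zero n1 (pow_ne_zero _ n2)) n4
  rw [div_sub_div _ _ d1 d2, div_eq_div_iff (mul_ne_zero d1 d2) d3]
  ring

set_option maxHeartbeats 1000000 in
private lemma lem_E2 (a b : ℂ) (n1 : a + 1 ≠ 0) (n2 : a + b + 2 ≠ 0)
    (n3 : 2 * a + b + 2 ≠ 0) :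
    qB1 a b - qB2 a b
      = -(b * (2*a+b+1)) / ((a+1) * (a+b+2) * (2*a+b+2)) := by
  unfold qB1 qB2
  have d1 : ((a + 1) * (a + b + 2) * (2 * a + b + 2)) ≠ 0 :=
    mul_ne_zero (mul_ne_zero n1 n2) n3
  have d2 : ((2 * a + b + 2) * (a + b + 2)) ≠ 0 := mul_ne_zero n3 n2
  have d3 : (a+1) * (a+b+2) * (2*a+b+2) ≠ 0 := mul_ne_zero (mul_ne_zero n1 n2) n3
  rw [div_sub_div _ _ d1 d2, div_eq_div_iff (mul_ne_zero d1 d2) d3]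
  ring

set_option maxHeartbeats 1000000 in
private lemma lem_E3 (a b : ℂ) (n1 : a + 1 ≠ 0) (n2 : a + b + 2 ≠ 0)
    (n3 : 2 * a + b + 2 ≠ 0) (n4 : 2 * a + b + 3 ≠ 0) :
    qB2 a b * qC1 a b - qB1 a b * qC2 a b
      = -((2*a+b+1)^2 * (a+b+1)^2 * (b+2)) /
        ((2*a+b+2) * (a+b+2)^3 * (2*a+b+3) * (a+1)) := by
  unfold qB1 qB2 qC1 qC2
  have d1 : (2 * a + b + 2) * (a + b + 2) * ((a + 1) * (a + b + 2) * (2 * a + b + 3)) ≠ 0 :=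
    mul_ne_zero (mul_ne_zero n3 n2) (mul_ne_zero (mul_ne_zero n1 n2) n4)
  have d2 : (a + 1) * (a + b + 2) * (2 * a + b + 2) * ((2 * a + b + 3) * (a + b + 2) ^ 2) ≠ 0 :=
    mul_ne_zero (mul_ne_zero (mul_ne_zero n1 n2) n3) (mul_ne_zero n4 (pow_ne_zero _ n2))
  have d3 : (2*a+b+2) * (a+b+2)^3 * (2*a+b+3) * (a+1) ≠ 0 :=
    mul_ne_zero (mul_ne_zero (mul_ne_zero n3 (pow_ne_zero _ n2)) n4) n1
  rw [div_mul_div_comm, div_mul_div_comm, div_sub_div _ _ d1 d2,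
    div_eq_div_iff (mul_ne_zero d1 d2) d3]
  ring

set_option maxHeartbeats 1000000 in
private lemma lem_res (a b : ℂ) (n1 : a + 1 ≠ 0) (n2 : a + b + 2 ≠ 0)
    (n3 : 2 * a + b + 2 ≠ 0) (n4 : 2 * a + b + 3 ≠ 0) :
    (qC2 a b - qC1 a b) ^ 2 - (qB1 a b - qB2 a b) * (qB2 a b * qC1 a b - qB1 a b * qC2 a b)
      = 2 * (2*a+b+1)^2 * (a+b+1)^2 * (2*a^2 + 2*a*b + 4*a + b^2 + 3*b + 2) /
        ((2*a+b+2)^2 * (a+b+2)^4 * (2*a+b+3)^2 * (a+1)^2) := by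
  rw [lem_E1 a b n1 n2 n4, lem_E2 a b n1 n2 n3, lem_E3 a b n1 n2 n3 n4]
  have d1 : ((a + 1) * (a + b + 2) ^ 2 * (2 * a + b + 3)) ^ 2 ≠ 0 :=
    pow_ne_zero _ (mul_ne_zero (mul_ne_zero n1 (pow_ne_zero _ n2)) n4)
  have d2 : (a + 1) * (a + b + 2) * (2 * a + b + 2) *
      ((2 * a + b + 2) * (a + b + 2) ^ 3 * (2 * a + b + 3) * (a + 1)) ≠ 0 :=
    mul_ne_zero (mul_ne_zero (mul_ne_zero n1 n2) n3)
      (mul_ne_zero (mul_ne_zero (mul_ne_zero n3 (pow_ne_zero _ n2)) n4) n1)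
  have d3 : (2*a+b+2)^2 * (a+b+2)^4 * (2*a+b+3)^2 * (a+1)^2 ≠ 0 :=
    mul_ne_zero (mul_ne_zero (mul_ne_zero (pow_ne_zero _ n3) (pow_ne_zero _ n2))
      (pow_ne_zero _ n4)) (pow_ne_zero _ n1)
  rw [div_pow, neg_div, neg_div, neg_mul_neg, div_mul_div_comm, div_sub_div _ _ d1 d2,
    div_eq_div_iff (mul_ne_zero d1 d2) d3]
  ring

private lemma lem_root (B1 C1 B2 C2 z : ℂ) (h1 : z ^ 2 - B1 * z + C1 = 0)
    (h2 : z ^ 2 - B2 * z + C2 = 0) :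
    (C2 - C1) ^ 2 - (B1 - B2) * (B2 * C1 - B1 * C2) = 0 := by
  linear_combination (-((B2 - B1) * z - B2 * (B2 - B1) - (C1 - C2))) * h1 +
    ((B2 - B1) * z - B1 * (B2 - B1) - (C1 - C2)) * h2

set_option maxHeartbeats 1000000 in
/-- Genericity of the explicit `B₂` solution: the monic quadratics `y₁, y₂`
have no common roots, no multiple roots, `y₁(1) ≠ 0`, `y₁(0) ≠ 0`, and
`y₂(0) ≠ 0` whenever `λ₂ > 0`. -/
theorem stmt_16 (l1 l2 : ℕ) (hl1 : 0 < l1) :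
    let L1 : ℂ := (l1 : ℂ)
    let L2 : ℂ := (l2 : ℂ)
    let y2 : Polynomial ℂ :=
      X ^ 2 - C (2 * (2 * L1 + L2 + 1) * (L1 + L2 + 1) /
        ((2 * L1 + L2 + 2) * (L1 + L2 + 2))) * X +
        C ((2 * L1 + L2 + 1) * (L1 + L2 + 1) ^ 2 /
          ((2 * L1 + L2 + 3) * (L1 + L2 + 2) ^ 2))
    let y1 : Polynomial ℂ :=
      X ^ 2 - C ((2 * L1 + L2 + 1) * (2 * L1 ^ 2 + 2 * L1 * L2 + 4 * L1 + L2 + 2) /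
        ((L1 + 1) * (L1 + L2 + 2) * (2 * L1 + L2 + 2))) * X +
        C (L1 * (L1 + L2 + 1) * (2 * L1 + L2 + 1) /
          ((L1 + 1) * (L1 + L2 + 2) * (2 * L1 + L2 + 3)))
    (∀ z : ℂ, ¬(y1.IsRoot z ∧ y2.IsRoot z)) ∧
    Squarefree y1 ∧ Squarefree y2 ∧
    y1.eval 1 ≠ 0 ∧ y1.eval 0 ≠ 0 ∧ (0 < l2 → y2.eval 0 ≠ 0) := by
  intro L1 L2 y2 y1
  have cast_ne : ∀ k : ℕ, 0 < k → ((k : ℕ) : ℂ) ≠ 0 := fun k hk => Nat.cast_ne_zero.mpr hk.ne'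
  have a := (l1 : ℂ)
  have n1 : ((l1 : ℂ) + 1 : ℂ) ≠ 0 := by
    have := cast_ne (l1 + 1) (by omega); push_cast at this; exact this
  have n2 : ((l1 : ℂ) + (l2 : ℂ) + 2 : ℂ) ≠ 0 := by
    have := cast_ne (l1 + l2 + 2) (by omega); push_cast at this
    intro h; exact this (by linear_combination h)
  have n3 : (2 * (l1 : ℂ) + (l2 : ℂ) + 2 : ℂ) ≠ 0 := by
    have := cast_ne (2 * l1 + l2 + 2) (by omega); push_cast at this
    intro h; exact this (by linear_combination h)
  have n4 : (2 * (l1 : ℂ) + (l2 : ℂ) + 3 : ℂ) ≠ 0 := by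
    have := cast_ne (2 * l1 + l2 + 3) (by omega); push_cast at this
    intro h; exact this (by linear_combination h)
  have n5 : (2 * (l1 : ℂ) + (l2 : ℂ) + 1 : ℂ) ≠ 0 := by
    have := cast_ne (2 * l1 + l2 + 1) (by omega); push_cast at this
    intro h; exact this (by linear_combination h)
  have n6 : ((l1 : ℂ) + (l2 : ℂ) + 1 : ℂ) ≠ 0 := by
    have := cast_ne (l1 + l2 + 1) (by omega); push_cast at this
    intro h; exact this (by linear_combination h)
  have n7 : ((l1 : ℂ) : ℂ) ≠ 0 := by
    have := cast_ne l1 hl1; push_cast at this; exact this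
  have nK1 : (12*(l1:ℂ)^4 + 24*(l1:ℂ)^3*(l2:ℂ) + 48*(l1:ℂ)^3 + 20*(l1:ℂ)^2*(l2:ℂ)^2
      + 76*(l1:ℂ)^2*(l2:ℂ) + 72*(l1:ℂ)^2 + 8*(l1:ℂ)*(l2:ℂ)^3 + 44*(l1:ℂ)*(l2:ℂ)^2
      + 80*(l1:ℂ)*(l2:ℂ) + 48*(l1:ℂ) + (l2:ℂ)^4 + 8*(l2:ℂ)^3 + 23*(l2:ℂ)^2
      + 28*(l2:ℂ) + 12 : ℂ) ≠ 0 := by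
    have := cast_ne (12*l1^4 + 24*l1^3*l2 + 48*l1^3 + 20*l1^2*l2^2 + 76*l1^2*l2 + 72*l1^2
      + 8*l1*l2^3 + 44*l1*l2^2 + 80*l1*l2 + 48*l1 + l2^4 + 8*l2^3 + 23*l2^2 + 28*l2 + 12)
      (by positivity)
    push_cast at this
    intro h; exact this (by linear_combination h)
  have nK2 : (6*(l1:ℂ)^2 + 6*(l1:ℂ)*(l2:ℂ) + 12*(l1:ℂ) + (l2:ℂ)^2 + 5*(l2:ℂ) + 6 : ℂ) ≠ 0 := by
    have := cast_ne (6*l1^2 + 6*l1*l2 + 12*l1 + l2^2 + 5*l2 + 6) (by positivity)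
    push_cast at this
    intro h; exact this (by linear_combination h)
  have nK3 : (2*(l1:ℂ)^2 + 2*(l1:ℂ)*(l2:ℂ) + 4*(l1:ℂ) + (l2:ℂ)^2 + 3*(l2:ℂ) + 2 : ℂ) ≠ 0 := by
    have := cast_ne (2*l1^2 + 2*l1*l2 + 4*l1 + l2^2 + 3*l2 + 2) (by positivity)
    push_cast at this
    intro h; exact this (by linear_combination h)
  have hy1 : y1 = X ^ 2 - C (qB1 (l1:ℂ) (l2:ℂ)) * X + C (qC1 (l1:ℂ) (l2:ℂ)) := rfl
  have hy2 : y2 = X ^ 2 - C (qB2 (l1:ℂ) (l2:ℂ)) * X + C (qC2 (l1:ℂ) (l2:ℂ)) := rfl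
  refine ⟨?_, ?_, ?_, ?_, ?_, ?_⟩
  · -- no common roots
    rintro z ⟨hz1, hz2⟩
    rw [hy1] at hz1
    rw [hy2] at hz2
    simp only [IsRoot, eval_add, eval_sub, eval_mul, eval_pow, eval_X, eval_C] at hz1 hz2
    have hR := lem_root _ _ _ _ z hz1 hz2
    rw [lem_res (l1:ℂ) (l2:ℂ) n1 n2 n3 n4] at hR
    have hden : ((2*(l1:ℂ)+(l2:ℂ)+2)^2 * ((l1:ℂ)+(l2:ℂ)+2)^4 * (2*(l1:ℂ)+(l2:ℂ)+3)^2
        * ((l1:ℂ)+1)^2 : ℂ) ≠ 0 :=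
      mul_ne_zero (mul_ne_zero (mul_ne_zero (pow_ne_zero _ n3) (pow_ne_zero _ n2))
        (pow_ne_zero _ n4)) (pow_ne_zero _ n1)
    have hnum : (2 * (2*(l1:ℂ)+(l2:ℂ)+1)^2 * ((l1:ℂ)+(l2:ℂ)+1)^2
        * (2*(l1:ℂ)^2 + 2*(l1:ℂ)*(l2:ℂ) + 4*(l1:ℂ) + (l2:ℂ)^2 + 3*(l2:ℂ) + 2) : ℂ) ≠ 0 :=
      mul_ne_zero (mul_ne_zero (mul_ne_zero two_ne_zero (pow_ne_zero _ n5))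
        (pow_ne_zero _ n6)) nK3
    exact (div_ne_zero hnum hden) hR
  · -- y1 squarefree
    rw [hy1]
    apply sf_quadratic_aux
    rw [lem_d1 (l1:ℂ) (l2:ℂ) n1 n2 n3 n4]
    exact div_ne_zero (mul_ne_zero n5 nK1)
      (mul_ne_zero (mul_ne_zero (mul_ne_zero (pow_ne_zero _ n3) (pow_ne_zero _ n2)) n4)
        (pow_ne_zero _ n1))
  · -- y2 squarefree
    rw [hy2]
    apply sf_quadratic_aux
    rw [lem_d2 (l1:ℂ) (l2:ℂ) n2 n3 n4]
    refine div_ne_zero (mul_ne_zero (by norm_num) (mul_ne_zero n5 (pow_ne_zero _ n6))) ?_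
    exact mul_ne_zero (mul_ne_zero (pow_ne_zero _ n3) (pow_ne_zero _ n2)) n4
  · -- y1.eval 1 ≠ 0
    rw [hy1]
    simp only [eval_add, eval_sub, eval_mul, eval_pow, eval_X, eval_C, one_pow, mul_one]
    intro h
    have h' : 1 - qB1 (l1:ℂ) (l2:ℂ) + qC1 (l1:ℂ) (l2:ℂ) = 0 := by linear_combination h
    rw [lem_e1 (l1:ℂ) (l2:ℂ) n1 n2 n3 n4] at h'
    exact (div_ne_zero nK2
      (mul_ne_zero (mul_ne_zero (mul_ne_zero n3 n2) n4) n1)) h'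
  · -- y1.eval 0 ≠ 0
    rw [hy1]
    simp only [eval_add, eval_sub, eval_mul, eval_pow, eval_X, eval_C, mul_zero]
    intro h
    have h' : qC1 (l1:ℂ) (l2:ℂ) = 0 := by linear_combination h
    revert h'
    unfold qC1
    exact div_ne_zero (mul_ne_zero (mul_ne_zero n7 n6) n5)
      (mul_ne_zero (mul_ne_zero n1 n2) n4)
  · -- y2.eval 0 ≠ 0
    intro _
    rw [hy2]
    simp only [eval_add, eval_sub, eval_mul, eval_pow, eval_X, eval_C, mul_zero]
    intro h
    have h' : qC2 (l1:ℂ) (l2:ℂ) = 0 := by linear_combination h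
    revert h'
    unfold qC2
    exact div_ne_zero (mul_ne_zero n5 (pow_ne_zero _ n6))
      (mul_ne_zero n4 (pow_ne_zero _ n2))
end
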